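/- Let S be the part of the tetrahedron T (with vertices p₀=(0,0,2H), p₁=(0,R,H), p₂=(0,0,H), p₃=(R·sin72°,R·cos72°,H), H ≈ 0.760071, R ≈ 0.649841) lying outside the closed unit ball centered at the origin. Then vol(T ∩ {z ≥ 1}) ≤ vol(S) ≤ vol(tetrahedron p₀p₁p₃p₄) where p₄=(0,0,1); numerically 0.0163 ≤ vol(S) ≤ 0.0349. -/

import Mathlib

/-!
The plane `z = 1` touches the unit sphere only at `p₄`, which gives the first inequality. Since
`p₄` lies on the edge `p₂p₀`, the tetrahedron `T` is the union of `p₀p₁p₃p₄` and `p₄p₂p₁p₃`; the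
vertices of the latter lie in the closed unit ball (`H² + R² = 1`), hence so does all of it, and
`S ⊆ p₀p₁p₃p₄`. For the numerical lower bound, the tetrahedron obtained from `T` by shrinking the
edges at `p₀` by the factors `0.787, 0.63, 0.787` lies beyond the plane
`0.162 x + 0.223 y + 0.961 z = 1`, whose normal has length `< 1`, so it lies in `S`. Volumes of
tetrahedra are `|det| / 6`, from the volume `aⁿ / n!` of the corner simplex.
-/

open Real MeasureTheory Set Pointwise
open scoped Nat

section Segment

variable {E : Type*} [AddCommGroup E] [Module ℝ E]

theorem segment_subset_union_of_mem_segment {x y z : E} (hy : y ∈ segment ℝ x z) :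
    segment ℝ x z ⊆ segment ℝ x y ∪ segment ℝ y z := by
  intro w hw
  rw [mem_segment_iff_wbtw] at hy hw
  obtain ⟨t, ht, rfl⟩ := hy
  obtain ⟨s, hs, rfl⟩ := id hw
  simp only [AffineMap.lineMap_apply, mem_union, mem_segment_iff_wbtw] at hw ⊢
  rcases wbtw_or_wbtw_smul_vadd_of_nonneg x (z -ᵥ x) hs.1 ht.1 with h | h
  · exact Or.inl h
  · exact Or.inr (hw.trans_left_right h)

theorem convexHull_subset_union_of_mem_segment {a b c d m : E} (hm : m ∈ segment ℝ a b) :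
    convexHull ℝ {a, b, c, d} ⊆ convexHull ℝ {a, m, c, d} ∪ convexHull ℝ {m, b, c, d} := by
  simp only [← convexJoin_segments, ← convexJoin_union_left]
  exact convexJoin_mono (segment_subset_union_of_mem_segment hm) subset_rfl

end Segment

section Simplex

def cornerSimplex (ι : Type*) [Fintype ι] (a : ℝ) : Set (ι → ℝ) :=
  {x | (∀ i, 0 ≤ x i) ∧ ∑ i, x i ≤ a}

theorem cornerSimplex_eq_empty (ι : Type*) [Fintype ι] {a : ℝ} (ha : a < 0) :
    cornerSimplex ι a = ∅ :=
  eq_empty_of_forall_notMem fun _ hx =>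
    (Finset.sum_nonneg fun i _ => hx.1 i).not_gt (hx.2.trans_lt ha)

theorem convex_cornerSimplex (ι : Type*) [Fintype ι] (a : ℝ) : Convex ℝ (cornerSimplex ι a) := by
  rintro x ⟨hx0, hxa⟩ y ⟨hy0, hya⟩ s t hs ht hst
  refine ⟨fun i => ?_, ?_⟩
  · have := hx0 i; have := hy0 i
    simp only [Pi.add_apply, Pi.smul_apply, smul_eq_mul]
    positivity
  · simp only [Pi.add_apply, Pi.smul_apply, smul_eq_mul, Finset.sum_add_distrib, ← Finset.mul_sum]
    calc s * ∑ i, x i + t * ∑ i, y i ≤ s * a + t * a := by gcongr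
      _ = a := by rw [← add_mul, hst, one_mul]

theorem convexHull_insert_zero_range_single (ι : Type*) [Fintype ι] [DecidableEq ι] :
    convexHull ℝ (insert 0 (range fun i => Pi.single i 1)) = cornerSimplex ι 1 := by
  refine (convexHull_min ?_ (convex_cornerSimplex ι 1)).antisymm fun x ⟨hx0, hx1⟩ => ?_
  · rintro _ (rfl | ⟨i, rfl⟩)
    · simp [cornerSimplex]
    · refine ⟨fun j => ?_, by simp⟩
      simp only [Pi.single_apply]
      split_ifs <;> norm_num
  · let w : Option ι → ℝ := fun o => o.elim (1 - ∑ i, x i) x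
    let z : Option ι → ι → ℝ := fun o => o.elim 0 fun i => Pi.single i 1
    have hw : ∑ o, w o • z o = x := by
      ext j
      simp [w, z, Fintype.sum_option, Finset.sum_apply, Pi.single_apply]
    rw [← hw]
    refine (convex_convexHull ℝ _).sum_mem (fun o _ => ?_) ?_ fun o _ => subset_convexHull ℝ _ ?_
    · cases o with
      | none => simpa [w] using hx1
      | some i => exact hx0 i
    · simp [w, Fintype.sum_option]
    · cases o with
      | none => exact mem_insert _ _
      | some i => exact mem_insert_of_mem _ ⟨i, rfl⟩

theorem integral_sub_pow_div_factorial (n : ℕ) (a : ℝ) :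
    ∫ x in (0)..a, (a - x) ^ n / n ! = a ^ (n + 1) / (n + 1)! := by
  rw [intervalIntegral.integral_comp_sub_left (fun u => u ^ n / n !), sub_self, sub_zero,
    intervalIntegral.integral_div, integral_pow, Nat.factorial_succ]
  push_cast
  field_simp
  ring

theorem volume_cornerSimplex (n : ℕ) {a : ℝ} (ha : 0 ≤ a) :
    volume (cornerSimplex (Fin n) a) = ENNReal.ofReal (a ^ n / n !) := by
  induction n generalizing a with
  | zero => simp [cornerSimplex, ha, volume_pi]
  | succ n ih =>
    set t : Set (ℝ × (Fin n → ℝ)) := {p | 0 ≤ p.1 ∧ p.2 ∈ cornerSimplex (Fin n) (a - p.1)}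
    have ht : MeasurableSet t := by
      simp only [t, cornerSimplex]
      measurability
    have hpre : cornerSimplex (Fin (n + 1)) a
        = MeasurableEquiv.piFinSuccAbove (fun _ => ℝ) 0 ⁻¹' t := by
      ext x
      simp only [t, cornerSimplex, Fin.sum_univ_succ, Fin.forall_fin_succ, mem_preimage,
        mem_ofPred_eq, MeasurableEquiv.piFinSuccAbove_apply, le_sub_iff_add_le']
      tauto
    have hslice : ∀ x, volume (Prod.mk x ⁻¹' t)
        = (Icc 0 a).indicator (fun x => ENNReal.ofReal ((a - x) ^ n / n !)) x := by
      intro x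
      by_cases hx0 : 0 ≤ x
      · by_cases hxa : x ≤ a
        · simp [t, hx0, hxa, ih (sub_nonneg.2 hxa)]
        · simp [t, hx0, hxa, cornerSimplex_eq_empty _ (sub_neg.2 (not_le.1 hxa))]
      · simp [t, hx0]
    rw [hpre, (volume_preserving_piFinSuccAbove (fun _ => ℝ) 0).measure_preimage
        ht.nullMeasurableSet, Measure.volume_eq_prod, Measure.prod_apply ht]
    simp_rw [hslice]
    rw [lintegral_indicator measurableSet_Icc, ← ofReal_integral_eq_lintegral_ofReal,
      integral_Icc_eq_integral_Ioc, ← intervalIntegral.integral_of_le ha,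
      integral_sub_pow_div_factorial]
    · exact (Continuous.integrableOn_Icc (by fun_prop)).integrable
    · exact (ae_restrict_iff' measurableSet_Icc).2 (ae_of_all _ fun x hx => by
        have := sub_nonneg.2 hx.2; positivity)

theorem volume_convexHull_insert_range {n : ℕ} (v₀ : Fin n → ℝ) (v : Fin n → Fin n → ℝ) :
    volume (convexHull ℝ (insert v₀ (range v)))
      = ENNReal.ofReal (|(Matrix.of fun i => v i - v₀).det| / n !) := by
  set M := Matrix.of fun i => v i - v₀
  have hset : insert v₀ (range v)
      = v₀ +ᵥ Matrix.toLin' M.transpose '' insert 0 (range fun i => Pi.single i 1) := by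
    rw [image_insert_eq, map_zero, ← range_comp, vadd_set_insert, vadd_eq_add, add_zero]
    congr 1
    ext x
    simp [M, mem_vadd_set]
  rw [hset, convexHull_vadd, ← LinearMap.image_convexHull, convexHull_insert_zero_range_single,
    measure_vadd, Measure.addHaar_image_linearMap, volume_cornerSimplex _ zero_le_one,
    LinearMap.det_toLin', Matrix.det_transpose, ← ENNReal.ofReal_mul (abs_nonneg _)]
  simp [div_eq_mul_inv]

theorem volume_convexHull_four (a b c d : Fin 3 → ℝ) :
    volume (convexHull ℝ {a, b, c, d})
      = ENNReal.ofReal (|(Matrix.of ![b - a, c - a, d - a]).det| / 6) := by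
  have hset : ({a, b, c, d} : Set (Fin 3 → ℝ)) = insert a (range ![b, c, d]) := by
    simp only [Matrix.range_cons, Matrix.range_empty, singleton_union, union_empty]
  rw [hset, volume_convexHull_insert_range]
  congr 4
  ext i j
  fin_cases i <;> rfl

end Simplex

section Ball

theorem convex_setOf_sum_sq_le (ι : Type*) [Fintype ι] (r : ℝ) :
    Convex ℝ {v : ι → ℝ | ∑ i, v i ^ 2 ≤ r} := by
  intro x hx y hy s t hs ht hst
  calc ∑ i, (s • x + t • y) i ^ 2 ≤ ∑ i, (s * x i ^ 2 + t * y i ^ 2) := by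
        refine Finset.sum_le_sum fun i _ => ?_
        obtain rfl : t = 1 - s := by linarith
        simp only [Pi.add_apply, Pi.smul_apply, smul_eq_mul]
        nlinarith [mul_nonneg (mul_nonneg hs ht) (sq_nonneg (x i - y i))]
    _ = s * ∑ i, x i ^ 2 + t * ∑ i, y i ^ 2 := by
        simp only [Finset.sum_add_distrib, Finset.mul_sum]
    _ ≤ s * r + t * r := by gcongr <;> assumption
    _ = r := by rw [← add_mul, hst, one_mul]

theorem one_lt_sum_sq_of_mem_convexHull {ι : Type*} [Fintype ι] {s : Set (ι → ℝ)} {u v : ι → ℝ}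
    (hu : ∑ i, u i ^ 2 ≤ 1) (hs : ∀ p ∈ s, 1 < u ⬝ᵥ p) (hv : v ∈ convexHull ℝ s) :
    1 < ∑ i, v i ^ 2 := by
  have huv : 1 < u ⬝ᵥ v := convexHull_min hs
    (convex_halfSpace_gt ⟨dotProduct_add u, fun c p => dotProduct_smul c u p⟩ 1) hv
  have hcs := Finset.sum_mul_sq_le_sq_mul_sq Finset.univ u v
  have hv0 : 0 ≤ ∑ i, v i ^ 2 := by positivity
  rw [dotProduct] at huv
  nlinarith

theorem volume_inter_setOf_one_le_le_volume_diff (T : Set (Fin 3 → ℝ)) :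
    volume (T ∩ {v | 1 ≤ v 2}) ≤ volume (T \ {v | v 0 ^ 2 + v 1 ^ 2 + v 2 ^ 2 ≤ 1}) := by
  have hsub : T ∩ {v | 1 ≤ v 2}
      ⊆ (T \ {v | v 0 ^ 2 + v 1 ^ 2 + v 2 ^ 2 ≤ 1}) ∪ {![0, 0, 1]} := by
    rintro v ⟨hvT, hv2⟩
    by_cases hv : v 0 ^ 2 + v 1 ^ 2 + v 2 ^ 2 ≤ 1
    · right
      simp only [mem_ofPred_eq] at hv2
      have h0 : v 0 = 0 := by nlinarith [sq_nonneg (v 1)]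
      have h1 : v 1 = 0 := by nlinarith [sq_nonneg (v 0)]
      have h2 : v 2 = 1 := by nlinarith [sq_nonneg (v 0), sq_nonneg (v 1)]
      ext i; fin_cases i <;> simp [h0, h1, h2]
    · exact Or.inl ⟨hvT, hv⟩
  calc volume (T ∩ {v | 1 ≤ v 2})
      ≤ volume (T \ {v | v 0 ^ 2 + v 1 ^ 2 + v 2 ^ 2 ≤ 1}) + volume {![(0 : ℝ), 0, 1]} :=
        (measure_mono hsub).trans (measure_union_le _ _)
    _ = _ := by rw [measure_singleton, add_zero]

end Ball

theorem cos_seventy_two_deg_mem_Icc : cos (72 * π / 180) ∈ Icc 0.309 0.30902 := by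
  have h5 := Real.sq_sqrt (show (0 : ℝ) ≤ 5 by norm_num)
  have h : cos (72 * π / 180) = (√5 - 1) / 4 := by
    rw [show 72 * π / 180 = 2 * (π / 5) by ring, Real.cos_two_mul, Real.cos_pi_div_five]
    linear_combination h5 / 8
  rw [h]
  constructor <;> nlinarith [Real.sqrt_nonneg 5]

theorem sin_seventy_two_deg_mem_Icc : sin (72 * π / 180) ∈ Icc 0.951 0.9511 := by
  have hpos : 0 ≤ sin (72 * π / 180) :=
    Real.sin_nonneg_of_nonneg_of_le_pi (by positivity) (by linarith [Real.pi_pos])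
  have hc := cos_seventy_two_deg_mem_Icc
  have := Real.sin_sq_add_cos_sq (72 * π / 180)
  constructor <;> nlinarith [hc.1, hc.2]

section Tetrahedron

variable {H R s c : ℝ}

theorem tetrahedron_diff_ball_subset (hH : 1 / 2 ≤ H) (hHR : H ^ 2 + R ^ 2 = 1)
    (hsc : s ^ 2 + c ^ 2 = 1) :
    convexHull ℝ {![0, 0, 2 * H], ![0, R, H], ![0, 0, H], ![R * s, R * c, H]}
        \ {v | v 0 ^ 2 + v 1 ^ 2 + v 2 ^ 2 ≤ 1}
      ⊆ convexHull ℝ {![0, 0, 2 * H], ![0, R, H], ![R * s, R * c, H], ![0, 0, 1]} := by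
  have hH1 : H ≤ 1 := by nlinarith [sq_nonneg R]
  have hm : ![0, 0, 1] ∈ segment ℝ ![0, 0, 2 * H] ![0, 0, H] := by
    refine ⟨(1 - H) / H, (2 * H - 1) / H, by positivity, div_nonneg (by linarith) (by linarith),
      by field_simp; ring, ?_⟩
    ext i; fin_cases i <;> simp; field_simp; ring
  have hball : Convex ℝ {v : Fin 3 → ℝ | v 0 ^ 2 + v 1 ^ 2 + v 2 ^ 2 ≤ 1} := by
    simpa [Fin.sum_univ_three] using convex_setOf_sum_sq_le (Fin 3) 1
  rintro v ⟨hvT, hvB⟩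
  rw [insert_comm ![0, R, H]] at hvT
  rcases convexHull_subset_union_of_mem_segment hm hvT with hA | hB
  · rwa [insert_comm ![0, 0, 1], pair_comm] at hA
  · refine absurd (convexHull_min ?_ hball hB) hvB
    rintro p (rfl | rfl | rfl | rfl) <;> simp <;> nlinarith [abs_of_pos (show 0 < H by linarith)]

theorem inner_tetrahedron_subset_diff_ball (hH : 0.76007 ≤ H) (hR : 0.64984 ≤ R) (hs : 0.951 ≤ s)
    (hc : 0.309 ≤ c) :
    convexHull ℝ {![0, 0, 2 * H], ![0, 0.787 * R, 1.213 * H], ![0, 0, 1.37 * H],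
        ![0.787 * (R * s), 0.787 * (R * c), 1.213 * H]}
      ⊆ convexHull ℝ {![0, 0, 2 * H], ![0, R, H], ![0, 0, H], ![R * s, R * c, H]}
        \ {v | v 0 ^ 2 + v 1 ^ 2 + v 2 ^ 2 ≤ 1} := by
  refine fun v hv => ⟨convexHull_min ?_ (convex_convexHull ℝ _) hv, ?_⟩
  · set T : Set (Fin 3 → ℝ) :=
      convexHull ℝ {![0, 0, 2 * H], ![0, R, H], ![0, 0, H], ![R * s, R * c, H]}
    have hp₀ : ![0, 0, 2 * H] ∈ T := subset_convexHull ℝ _ (by simp)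
    have hp₁ : ![0, R, H] ∈ T := subset_convexHull ℝ _ (by simp)
    have hp₂ : ![0, 0, H] ∈ T := subset_convexHull ℝ _ (by simp)
    have hp₃ : ![R * s, R * c, H] ∈ T := subset_convexHull ℝ _ (by simp)
    rintro p (rfl | rfl | rfl | rfl)
    · exact hp₀
    · convert convex_convexHull ℝ _ hp₀ hp₁ (by norm_num : (0 : ℝ) ≤ 0.213)
        (by norm_num : (0 : ℝ) ≤ 0.787) (by norm_num) using 1
      ext i; fin_cases i <;> simp; ring
    · convert convex_convexHull ℝ _ hp₀ hp₂ (by norm_num : (0 : ℝ) ≤ 0.37)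
        (by norm_num : (0 : ℝ) ≤ 0.63) (by norm_num) using 1
      ext i; fin_cases i <;> simp; ring
    · convert convex_convexHull ℝ _ hp₀ hp₃ (by norm_num : (0 : ℝ) ≤ 0.213)
        (by norm_num : (0 : ℝ) ≤ 0.787) (by norm_num) using 1
      ext i; fin_cases i <;> simp; ring
  · have hRs : 0.64984 * 0.951 ≤ R * s := mul_le_mul hR hs (by norm_num) (by linarith)
    have hRc : 0.64984 * 0.309 ≤ R * c := mul_le_mul hR hc (by norm_num) (by linarith)
    have := one_lt_sum_sq_of_mem_convexHull (u := ![0.162, 0.223, 0.961])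
      (by simp [Fin.sum_univ_three]; norm_num) ?_ hv
    · simpa [Fin.sum_univ_three] using this
    rintro p (rfl | rfl | rfl | rfl) <;> simp [dotProduct, Fin.sum_univ_three] <;> nlinarith

theorem volume_outer_tetrahedron :
    volume (convexHull ℝ {![0, 0, 2 * H], ![0, R, H], ![R * s, R * c, H], ![0, 0, 1]})
      = ENNReal.ofReal (|(2 * H - 1) * R ^ 2 * s| / 6) := by
  rw [volume_convexHull_four, Matrix.det_fin_three]
  congr 3
  simp
  ring

theorem volume_inner_tetrahedron :
    volume (convexHull ℝ {![0, 0, 2 * H], ![0, 0.787 * R, 1.213 * H], ![0, 0, 1.37 * H],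
        ![0.787 * (R * s), 0.787 * (R * c), 1.213 * H]})
      = ENNReal.ofReal (|0.787 ^ 2 * 0.63 * H * R ^ 2 * s| / 6) := by
  rw [volume_convexHull_four, Matrix.det_fin_three, ← abs_neg]
  congr 3
  simp
  ring

end Tetrahedron

/-- Let `S` be the part of the tetrahedron `T` (with vertices `p₀ = (0,0,2H)`, `p₁ = (0,R,H)`,
`p₂ = (0,0,H)`, `p₃ = (R·sin 72°, R·cos 72°, H)`, where `H ≈ 0.760071`, `R ≈ 0.649841` and
`H² + R² = 1`) lying outside the closed unit ball centered at the origin.  Then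
`vol(T ∩ {z ≥ 1}) ≤ vol(S) ≤ vol(tetrahedron p₀p₁p₃p₄)` where `p₄ = (0,0,1)`; numerically
`0.0163 ≤ vol(S) ≤ 0.0349`. -/
theorem stmt_12 (H R : ℝ)
    (hH : |H - 0.760071| < 1e-6) (hR : |R - 0.649841| < 1e-6) (hHR : H ^ 2 + R ^ 2 = 1) :
    let p₀ : Fin 3 → ℝ := ![0, 0, 2 * H]
    let p₁ : Fin 3 → ℝ := ![0, R, H]
    let p₂ : Fin 3 → ℝ := ![0, 0, H]
    let p₃ : Fin 3 → ℝ := ![R * Real.sin (72 * π / 180), R * Real.cos (72 * π / 180), H]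
    let p₄ : Fin 3 → ℝ := ![0, 0, 1]
    let T : Set (Fin 3 → ℝ) := convexHull ℝ {p₀, p₁, p₂, p₃}
    let S : Set (Fin 3 → ℝ) := T \ {v | v 0 ^ 2 + v 1 ^ 2 + v 2 ^ 2 ≤ 1}
    volume (T ∩ {v : Fin 3 → ℝ | 1 ≤ v 2}) ≤ volume S ∧
    volume S ≤ volume (convexHull ℝ {p₀, p₁, p₃, p₄}) ∧
    0.0163 ≤ (volume S).toReal ∧ (volume S).toReal ≤ 0.0349 := by
  intro p₀ p₁ p₂ p₃ p₄ T S
  obtain ⟨hH₁, hH₂⟩ := abs_lt.1 hH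
  obtain ⟨hR₁, hR₂⟩ := abs_lt.1 hR
  obtain ⟨hs₁, hs₂⟩ := sin_seventy_two_deg_mem_Icc
  obtain ⟨hc₁, -⟩ := cos_seventy_two_deg_mem_Icc
  have hSA : S ⊆ convexHull ℝ {p₀, p₁, p₃, p₄} :=
    tetrahedron_diff_ball_subset (by linarith) hHR (Real.sin_sq_add_cos_sq _)
  have hA : volume (convexHull ℝ {p₀, p₁, p₃, p₄}) ≤ ENNReal.ofReal 0.0349 := by
    rw [volume_outer_tetrahedron,
      abs_of_nonneg (mul_nonneg (mul_nonneg (by linarith) (sq_nonneg R)) (by linarith))]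
    refine ENNReal.ofReal_le_ofReal ?_
    calc (2 * H - 1) * R ^ 2 * sin (72 * π / 180) / 6
        ≤ 0.520144 * 0.649842 ^ 2 * 0.9511 / 6 := by gcongr <;> linarith
      _ ≤ 0.0349 := by norm_num
  have hK : ENNReal.ofReal 0.0163 ≤ volume S := by
    refine le_trans ?_ (measure_mono
      (inner_tetrahedron_subset_diff_ball (by linarith) (by linarith) hs₁ hc₁))
    rw [volume_inner_tetrahedron,
      abs_of_nonneg (mul_nonneg (mul_nonneg (by nlinarith) (sq_nonneg R)) (by linarith))]
    refine ENNReal.ofReal_le_ofReal ?_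
    calc (0.0163 : ℝ) ≤ 0.787 ^ 2 * 0.63 * 0.76007 * 0.64984 ^ 2 * 0.951 / 6 := by norm_num
      _ ≤ 0.787 ^ 2 * 0.63 * H * R ^ 2 * sin (72 * π / 180) / 6 := by
          gcongr <;> nlinarith [sq_nonneg R]
  have hS : volume S ≤ ENNReal.ofReal 0.0349 := (measure_mono hSA).trans hA
  refine ⟨volume_inter_setOf_one_le_le_volume_diff T, measure_mono hSA, ?_,
    ENNReal.toReal_le_of_le_ofReal (by norm_num) hS⟩
  exact (ENNReal.ofReal_le_iff_le_toReal (ne_top_of_le_ne_top ENNReal.ofReal_ne_top hS)).1 hK
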